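/- For each integer k ≥ 1, the generating function Σ_{n≥0} b_{n,k} x^n, where b_{n,k} is the number of words of length n over {1,...,k} using every letter of {1,...,k} and avoiding both patterns 2-11 and 1-22, equals k! · x^k / ((1−x) · ∏_{i=1}^{k-1} (1 − i·x)) as formal power series over the rationals. -/

import Mathlib

open PowerSeries Function Finset
open scoped Classical

/-- `w` contains the generalized pattern 2-11: ∃ i < j < n with w i > w j = w (j+1). -/
def Contains211 {n m : ℕ} (w : Fin n → Fin m) : Prop :=
  ∃ i j k : Fin n, i < j ∧ (j : ℕ) + 1 = (k : ℕ) ∧ w j < w i ∧ w j = w k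

/-- `w` contains the generalized pattern 1-22: ∃ i < j < n with w i < w j = w (j+1). -/
def Contains122 {n m : ℕ} (w : Fin n → Fin m) : Prop :=
  ∃ i j k : Fin n, i < j ∧ (j : ℕ) + 1 = (k : ℕ) ∧ w i < w j ∧ w j = w k

namespace GFAux

def Valid {n k : ℕ} (w : Fin n → Fin k) : Prop :=
  ∀ i j j' : Fin n, i ≤ j → (j : ℕ) + 1 = (j' : ℕ) → w j = w j' → w i = w j

lemma valid_iff {n k : ℕ} (w : Fin n → Fin k) :
    (¬ Contains211 w ∧ ¬ Contains122 w) ↔ Valid w := by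
  constructor
  · rintro ⟨h1, h2⟩ i j j' hij hjj' hw
    rcases eq_or_lt_of_le hij with rfl | hlt
    · rfl
    rcases lt_trichotomy (w i) (w j) with h | h | h
    · exact absurd ⟨i, j, j', hlt, hjj', h, hw⟩ h2
    · exact h
    · exact absurd ⟨i, j, j', hlt, hjj', h, hw⟩ h1
  · intro hv
    constructor
    · rintro ⟨i, j, j', hlt, hjj', h, hw⟩
      exact absurd (hv i j j' hlt.le hjj' hw) h.ne'
    · rintro ⟨i, j, j', hlt, hjj', h, hw⟩
      exact absurd (hv i j j' hlt.le hjj' hw) h.ne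

lemma valid_comp {n k k' : ℕ} {f : Fin k → Fin k'} (hf : Injective f)
    (w : Fin n → Fin k) : Valid (f ∘ w) ↔ Valid w := by
  constructor
  · intro h i j j' hij hjj' hw
    exact hf (h i j j' hij hjj' (congrArg f hw))
  · intro h i j j' hij hjj' hw
    exact congrArg f (h i j j' hij hjj' (hf hw))

noncomputable def cnt (n k : ℕ) : ℕ :=
  Nat.card {w : Fin n → Fin k // Function.Surjective w ∧ ¬ Contains211 w ∧ ¬ Contains122 w}

lemma cnt_eq (n k : ℕ) :
    cnt n k = (univ.filter fun w : Fin n → Fin k => Surjective w ∧ Valid w).card := by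
  rw [cnt, Nat.card_eq_fintype_card, Fintype.card_subtype]
  congr 1
  apply filter_congr
  intro w _
  rw [and_congr_right_iff]
  intro _
  exact (valid_iff w)

lemma cnt_zero {k : ℕ} (hk : 1 ≤ k) : cnt 0 k = 0 := by
  rw [cnt_eq, Finset.card_eq_zero, Finset.eq_empty_iff_forall_notMem]
  intro w hw
  simp only [mem_filter] at hw
  obtain ⟨y⟩ := Fin.pos_iff_nonempty.mp hk
  obtain ⟨i, -⟩ := hw.2.1 y
  exact i.elim0

lemma cnt_one_letter {n : ℕ} (hn : 1 ≤ n) : cnt n 1 = 1 := by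
  rw [cnt_eq]
  have : (univ.filter fun w : Fin n → Fin 1 => Surjective w ∧ Valid w) = univ := by
    apply Finset.eq_univ_of_forall
    intro w
    simp only [mem_filter, mem_univ, true_and]
    constructor
    · intro y
      exact ⟨⟨0, hn⟩, Subsingleton.elim _ _⟩
    · intro i j j' _ _ _
      exact Subsingleton.elim _ _
  rw [this, card_univ]
  simp

lemma cnt_one_long {k : ℕ} (hk : 2 ≤ k) : cnt 1 k = 0 := by
  rw [cnt_eq, Finset.card_eq_zero, Finset.eq_empty_iff_forall_notMem]
  intro w hw
  simp only [mem_filter] at hw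
  have := Fintype.card_le_of_surjective w hw.2.1
  simp at this
  omega

lemma snoc_of_lt {m K : ℕ} (v : Fin m → Fin K) (x : Fin K) (t : Fin (m+1)) (h : (t:ℕ) < m) :
    (Fin.snoc v x : Fin (m+1) → Fin K) t = v ⟨t, h⟩ := by
  simp [Fin.snoc, h]
  rfl

lemma snoc_of_eq {m K : ℕ} (v : Fin m → Fin K) (x : Fin K) (t : Fin (m+1)) (h : (t:ℕ) = m) :
    (Fin.snoc v x : Fin (m+1) → Fin K) t = x := by
  simp [Fin.snoc, h]

lemma surj_snoc {m K : ℕ} (v : Fin m → Fin K) (x : Fin K) :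
    Surjective (Fin.snoc v x) ↔ ∀ y, y ∈ Set.range v ∨ y = x := by
  constructor
  · intro h y
    obtain ⟨t, ht⟩ := h y
    rcases Nat.lt_or_ge (t : ℕ) m with h' | h'
    · exact Or.inl ⟨⟨t, h'⟩, by rw [← snoc_of_lt v x t h']; exact ht⟩
    · have : (t : ℕ) = m := by omega
      exact Or.inr (ht.symm.trans (snoc_of_eq v x t this))
  · intro h y
    rcases h y with ⟨i, hi⟩ | hy
    · exact ⟨Fin.castSucc i, by rw [Fin.snoc_castSucc]; exact hi⟩
    · exact ⟨Fin.last m, (snoc_of_eq v x (Fin.last m) (by simp)).trans hy.symm⟩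

lemma valid_snoc {m K : ℕ} (hm : 1 ≤ m) (v : Fin m → Fin K) (x : Fin K) :
    Valid (Fin.snoc v x) ↔ Valid v ∧ (x = v ⟨m-1, by omega⟩ → ∀ i, v i = x) := by
  constructor
  · intro h
    constructor
    · intro i j j' hij hjj' hw
      have key := h (Fin.castSucc i) (Fin.castSucc j) (Fin.castSucc j')
        (Fin.castSucc_le_castSucc_iff.mpr hij) (by simp only [Fin.coe_castSucc]; exact hjj')
        (by simpa [Fin.snoc_castSucc] using hw)
      simpa [Fin.snoc_castSucc] using key
    · intro hx i
      have key := h (Fin.castSucc i) (Fin.castSucc ⟨m-1, by omega⟩) (Fin.last m)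
        (by rw [Fin.castSucc_le_castSucc_iff, Fin.le_def]; exact Nat.le_pred_of_lt i.isLt)
        (by simp only [Fin.coe_castSucc, Fin.val_last]; omega)
        (by rw [Fin.snoc_castSucc, Fin.snoc_last]; exact hx.symm)
      rw [Fin.snoc_castSucc, Fin.snoc_castSucc] at key
      rw [key, ← hx]
  · rintro ⟨hv, hc⟩ i j j' hij hjj' hw
    rcases Nat.lt_or_ge (j' : ℕ) m with hj' | hj'
    · have hj : (j : ℕ) < m := by omega
      have hi : (i : ℕ) < m := by have := Fin.le_def.mp hij; omega
      rw [snoc_of_lt v x i hi, snoc_of_lt v x j hj]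
      rw [snoc_of_lt v x j hj, snoc_of_lt v x j' hj'] at hw
      exact hv ⟨i, hi⟩ ⟨j, hj⟩ ⟨j', hj'⟩ (Fin.mk_le_mk.mpr (Fin.le_def.mp hij)) hjj' hw
    · have hj'm : (j' : ℕ) = m := by have := j'.isLt; omega
      have hj : (j : ℕ) < m := by omega
      have hjm : (j : ℕ) = m - 1 := by omega
      rw [snoc_of_lt v x j hj, snoc_of_eq v x j' hj'm] at hw
      have hL : (⟨(j:ℕ), hj⟩ : Fin m) = ⟨m-1, by omega⟩ := by simp [hjm]
      have hall := hc (by rw [← hL, ← hw])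
      have hi : (i : ℕ) < m := by have := Fin.le_def.mp hij; omega
      rw [snoc_of_lt v x i hi, snoc_of_lt v x j hj, hall ⟨i, hi⟩, hall ⟨j, hj⟩]

lemma Fv_card {m k : ℕ} (hm : 1 ≤ m) (hk : 1 ≤ k) (v : Fin m → Fin (k+1)) :
    (univ.filter fun x : Fin (k+1) =>
        Surjective (Fin.snoc v x) ∧ Valid (Fin.snoc v x)).card =
      k * (if Surjective v ∧ Valid v then 1 else 0) +
      (if Valid v ∧ ∃ c, ∀ y, y ∈ Set.range v ↔ y ≠ c then 1 else 0) := by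
  by_cases hval : Valid v
  · by_cases hsurj : Surjective v
    · have h2 : ¬ ∃ c : Fin (k+1), ∀ y, y ∈ Set.range v ↔ y ≠ c := by
        rintro ⟨c, hc⟩
        exact ((hc c).mp (hsurj c)) rfl
      rw [if_pos ⟨hsurj, hval⟩, if_neg (fun h => h2 h.2)]
      have hcond : ∀ x : Fin (k+1),
          (Surjective (Fin.snoc v x) ∧ Valid (Fin.snoc v x)) ↔ x ≠ v ⟨m-1, by omega⟩ := by
        intro x
        rw [surj_snoc, valid_snoc hm]
        constructor
        · rintro ⟨-, -, h⟩ hx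
          have hall := h hx
          obtain ⟨i0, hi0⟩ := hsurj 0
          obtain ⟨i1, hi1⟩ := hsurj 1
          have e0 : (0 : Fin (k+1)) = x := by rw [← hi0, hall i0]
          have e1 : (1 : Fin (k+1)) = x := by rw [← hi1, hall i1]
          have : (0 : Fin (k+1)) = 1 := e0.trans e1.symm
          have h01 := congrArg Fin.val this
          simp [Fin.val_zero, Fin.val_one] at h01
          omega
        · intro hx
          refine ⟨fun y => Or.inl (hsurj y), hval, fun h => absurd h hx⟩
      rw [filter_congr (fun x _ => hcond x), filter_ne', card_erase_of_mem (mem_univ _),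
        card_univ]
      simp
    · rw [if_neg (fun h => hsurj h.1)]
      by_cases hone : ∃ c : Fin (k+1), ∀ y, y ∈ Set.range v ↔ y ≠ c
      · obtain ⟨c, hc⟩ := hone
        rw [if_pos ⟨hval, c, hc⟩]
        have hset : (univ.filter fun x : Fin (k+1) =>
            Surjective (Fin.snoc v x) ∧ Valid (Fin.snoc v x)) = {c} := by
          ext x
          simp only [mem_filter, mem_univ, true_and, mem_singleton]
          constructor
          · rintro ⟨hs, -⟩
            rcases (surj_snoc v x).mp hs c with hcr | hcx
            · exact absurd rfl ((hc c).mp hcr)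
            · exact hcx.symm
          · rintro rfl
            refine ⟨(surj_snoc v x).mpr ?_, (valid_snoc hm v x).mpr ⟨hval, ?_⟩⟩
            · intro y
              by_cases hy : y = x
              · exact Or.inr hy
              · exact Or.inl ((hc y).mpr hy)
            · intro hcL
              exact absurd hcL.symm ((hc (v ⟨m-1, by omega⟩)).mp ⟨_, rfl⟩)
        rw [hset, card_singleton]
        simp
      · rw [if_neg (fun h => hone h.2)]
        have hset : (univ.filter fun x : Fin (k+1) =>
            Surjective (Fin.snoc v x) ∧ Valid (Fin.snoc v x)) = ∅ := by
          rw [Finset.eq_empty_iff_forall_notMem]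
          intro x hx
          simp only [mem_filter, mem_univ, true_and] at hx
          have hor := (surj_snoc v x).mp hx.1
          have hxr : x ∉ Set.range v := by
            intro hxr
            apply hsurj
            intro y
            rcases hor y with h | rfl
            · exact h
            · exact hxr
          apply hone
          refine ⟨x, fun y => ⟨fun hy hyx => hxr (hyx ▸ hy), fun hy => ?_⟩⟩
          rcases hor y with h | rfl
          · exact h
          · exact absurd rfl hy
        rw [hset, card_empty]
        simp
  · have hset : (univ.filter fun x : Fin (k+1) =>
        Surjective (Fin.snoc v x) ∧ Valid (Fin.snoc v x)) = ∅ := by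
      rw [Finset.eq_empty_iff_forall_notMem]
      intro x hx
      simp only [mem_filter, mem_univ, true_and] at hx
      exact hval (((valid_snoc hm v x).mp hx.2).1)
    rw [hset, card_empty, if_neg (fun h => hval h.2), if_neg (fun h => hval h.1)]
    simp


lemma missing_card {m k : ℕ} :
    (univ.filter fun v : Fin m → Fin (k+1) =>
        Valid v ∧ ∃ c, ∀ y, y ∈ Set.range v ↔ y ≠ c).card =
      (k+1) * (univ.filter fun u : Fin m → Fin k => Surjective u ∧ Valid u).card := by
  have hbij : ((univ : Finset (Fin (k+1))) ×ˢ
      (univ.filter fun u : Fin m → Fin k => Surjective u ∧ Valid u)).card =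
      (univ.filter fun v : Fin m → Fin (k+1) =>
        Valid v ∧ ∃ c, ∀ y, y ∈ Set.range v ↔ y ≠ c).card := by
    apply Finset.card_bij (i := fun p _ => p.1.succAbove ∘ p.2)
    · rintro ⟨c, u⟩ hp
      rw [Finset.mem_product, mem_filter] at hp
      obtain ⟨-, -, hsurj, hvalid⟩ := hp
      simp only [mem_filter, mem_univ, true_and]
      refine ⟨(valid_comp (Fin.succAbove_right_injective) u).mpr hvalid, c, fun y => ?_⟩
      constructor
      · rintro ⟨i, rfl⟩
        exact Fin.succAbove_ne c (u i)
      · intro hy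
        obtain ⟨z, hz⟩ := Fin.exists_succAbove_eq hy
        obtain ⟨i, rfl⟩ := hsurj z
        exact ⟨i, hz⟩
    · rintro ⟨c, u⟩ h1 ⟨c', u'⟩ h2 heq
      rw [Finset.mem_product, mem_filter] at h1 h2
      have hcc : c = c' := by
        by_contra hne
        obtain ⟨z, hz⟩ := Fin.exists_succAbove_eq (Ne.symm hne)
        obtain ⟨i, rfl⟩ := h1.2.2.1 z
        have := congrFun heq i
        simp only [comp_apply] at this
        rw [hz] at this
        exact Fin.succAbove_ne c' (u' i) this.symm
      subst hcc
      have huu : u = u' := by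
        funext i
        exact Fin.succAbove_right_injective (congrFun heq i)
      rw [huu]
    · intro b hb
      simp only [mem_filter, mem_univ, true_and] at hb
      obtain ⟨hvalid, c, hc⟩ := hb
      have hbc : ∀ i, b i ≠ c := fun i => (hc (b i)).mp ⟨i, rfl⟩
      have hex : ∀ i, ∃ z, c.succAbove z = b i := fun i => Fin.exists_succAbove_eq (hbc i)
      set u : Fin m → Fin k := fun i => (hex i).choose with hu
      have hspec : ∀ i, c.succAbove (u i) = b i := fun i => (hex i).choose_spec
      have hfu : c.succAbove ∘ u = b := funext hspec
      refine ⟨(c, u), ?_, hfu⟩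
      rw [Finset.mem_product, mem_filter]
      refine ⟨mem_univ _, mem_univ _, ?_, ?_⟩
      · intro z
        obtain ⟨i, hi⟩ := (hc (c.succAbove z)).mpr (Fin.succAbove_ne c z)
        exact ⟨i, Fin.succAbove_right_injective ((hspec i).trans hi)⟩
      · rw [← valid_comp (Fin.succAbove_right_injective (p := c)) u, hfu]
        exact hvalid
  rw [← hbij, Finset.card_product, Finset.card_univ]
  simp

lemma key_sum {m k : ℕ} (hm : 1 ≤ m) (hk : 1 ≤ k) :
    (univ.filter fun w : Fin (m+1) → Fin (k+1) => Surjective w ∧ Valid w).card =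
      k * (univ.filter fun w : Fin m → Fin (k+1) => Surjective w ∧ Valid w).card +
      (k+1) * (univ.filter fun u : Fin m → Fin k => Surjective u ∧ Valid u).card := by
  rw [Finset.card_eq_sum_card_fiberwise
    (f := fun w : Fin (m+1) → Fin (k+1) => Fin.init w) (t := univ) (fun _ _ => mem_univ _)]
  have step : ∀ v : Fin m → Fin (k+1),
      ((univ.filter fun w : Fin (m+1) → Fin (k+1) => Surjective w ∧ Valid w).filter
        fun w => Fin.init w = v).card =
      (univ.filter fun x : Fin (k+1) =>
        Surjective (Fin.snoc v x) ∧ Valid (Fin.snoc v x)).card := by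
    intro v
    apply Finset.card_bij (i := fun w _ => w (Fin.last m))
    · intro w hw
      simp only [mem_filter, mem_univ, true_and] at hw ⊢
      obtain ⟨⟨hs, hv⟩, hinit⟩ := hw
      have hsn : Fin.snoc v (w (Fin.last m)) = w := by
        rw [← hinit]; exact Fin.snoc_init_self w
      rw [hsn]
      exact ⟨hs, hv⟩
    · intro w1 h1 w2 h2 heq
      simp only [mem_filter] at h1 h2
      rw [← Fin.snoc_init_self w1, ← Fin.snoc_init_self w2, h1.2, h2.2, heq]
    · intro x hx
      simp only [mem_filter, mem_univ, true_and] at hx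
      refine ⟨Fin.snoc v x, ?_, ?_⟩
      · simp only [mem_filter, mem_univ, true_and]
        exact ⟨hx, by simp⟩
      · exact snoc_of_eq v x (Fin.last m) (by simp)
  rw [Finset.sum_congr rfl (fun v _ => (step v).trans (Fv_card hm hk v))]
  rw [Finset.sum_add_distrib, ← Finset.mul_sum, ← Finset.card_filter, ← Finset.card_filter,
    missing_card]


lemma cnt_rec {m k : ℕ} (hm : 1 ≤ m) (hk : 1 ≤ k) :
    cnt (m+1) (k+1) = k * cnt m (k+1) + (k+1) * cnt m k := by
  rw [cnt_eq, cnt_eq, cnt_eq]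
  exact key_sum hm hk

lemma cnt_recq (n k : ℕ) (hk : 1 ≤ k) :
    (cnt (n+1) (k+1) : ℚ) = k * cnt n (k+1) + ((k : ℚ)+1) * cnt n k := by
  rcases Nat.eq_zero_or_pos n with rfl | hn
  · rw [cnt_zero (show 1 ≤ k+1 by omega), cnt_zero hk, cnt_one_long (by omega)]
    simp
  · rw [cnt_rec hn hk]
    push_cast
    ring

lemma main_identity (k : ℕ) (hk : 1 ≤ k) :
    (PowerSeries.mk fun n => (cnt n k : ℚ)) *
      ((1 - X) * ∏ i ∈ Finset.Icc 1 (k - 1), (1 - PowerSeries.C (R := ℚ) (i : ℚ) * X)) =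
      PowerSeries.C (R := ℚ) (Nat.factorial k : ℚ) * (X : ℚ⟦X⟧) ^ k := by
  induction k, hk using Nat.le_induction with
  | base =>
    rw [show (1:ℕ) - 1 = 0 from rfl, Finset.Icc_eq_empty (by omega), Finset.prod_empty, mul_one]
    ext n
    rw [mul_sub, mul_one, map_sub]
    rcases n with _ | n
    · simp [cnt_zero (le_refl 1), coeff_zero_mul_X]
    · rw [coeff_succ_mul_X]
      simp only [coeff_mk, Nat.factorial_one, Nat.cast_one, map_one, one_mul, pow_one, coeff_X]
      rcases Nat.eq_zero_or_pos n with rfl | hn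
      · rw [cnt_one_letter (le_refl 1), cnt_zero (le_refl 1)]
        simp
      · rw [cnt_one_letter (by omega : 1 ≤ n+1), cnt_one_letter hn, if_neg (by omega)]
        simp
  | succ k hk ih =>
    set Bk1 : ℚ⟦X⟧ := PowerSeries.mk fun n => (cnt n (k+1) : ℚ) with hB1
    set Bk : ℚ⟦X⟧ := PowerSeries.mk fun n => (cnt n k : ℚ) with hB
    have hstep : Bk1 * (1 - PowerSeries.C (R := ℚ) (k : ℚ) * X) =
        (PowerSeries.C (R := ℚ) ((k : ℚ)+1) * X) * Bk := by
      have lhs_eq : Bk1 * (1 - PowerSeries.C (R := ℚ) (k : ℚ) * X) =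
          Bk1 - PowerSeries.C (R := ℚ) (k : ℚ) * (Bk1 * X) := by ring
      have rhs_eq : (PowerSeries.C (R := ℚ) ((k : ℚ)+1) * X) * Bk =
          PowerSeries.C (R := ℚ) ((k : ℚ)+1) * (Bk * X) := by ring
      rw [lhs_eq, rhs_eq]
      ext n
      rw [map_sub, coeff_C_mul, coeff_C_mul]
      rcases n with _ | n
      · rw [coeff_zero_mul_X, coeff_zero_mul_X]
        simp [hB1, cnt_zero (show 1 ≤ k+1 by omega)]
      · rw [coeff_succ_mul_X, coeff_succ_mul_X]
        simp only [hB1, hB, coeff_mk]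
        rw [cnt_recq n k hk]
        ring
    set P : ℚ⟦X⟧ := ∏ i ∈ Finset.Icc 1 (k-1), (1 - PowerSeries.C (R := ℚ) (i : ℚ) * X) with hP
    have hfac : k - 1 + 1 = k := by omega
    rw [show k + 1 - 1 = k from rfl, ← hfac, Finset.prod_Icc_succ_top (by omega), hfac]
    have hre : Bk1 * ((1 - X) * (P * (1 - PowerSeries.C (R := ℚ) (k : ℚ) * X))) =
        (Bk1 * (1 - PowerSeries.C (R := ℚ) (k : ℚ) * X)) * ((1 - X) * P) := by ring
    rw [hre, hstep, mul_assoc, ih, Nat.factorial_succ]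
    push_cast
    rw [map_mul]
    ring

end GFAux

theorem gf_reduced_words_211_122 (k : ℕ) (hk : 1 ≤ k) :
    (PowerSeries.mk fun n =>
        (Nat.card {w : Fin n → Fin k //
            Function.Surjective w ∧ ¬ Contains211 w ∧ ¬ Contains122 w} : ℚ)) =
      PowerSeries.C (R := ℚ) (Nat.factorial k : ℚ) * (X : ℚ⟦X⟧) ^ k *
        ((1 - X) * ∏ i ∈ Finset.Icc 1 (k - 1), (1 - PowerSeries.C (R := ℚ) (i : ℚ) * X))⁻¹ := by
  have hD : PowerSeries.constantCoeff (R := ℚ)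
      ((1 - X) * ∏ i ∈ Finset.Icc 1 (k - 1), (1 - PowerSeries.C (R := ℚ) (i : ℚ) * X)) ≠ 0 := by
    rw [map_mul, map_prod]
    simp
  rw [PowerSeries.eq_mul_inv_iff_mul_eq hD]
  exact GFAux.main_identity k hk
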